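/- arXiv:2104.03060 — 2 statements merged into one kernel-verified Lean document; each statement's English description precedes it below -/
import Mathlib

section
/- Let r > 0 and let w be a real-valued function that is continuous on the punctured closed ball \bar{B}_r(0) ∖ {0} in ℝ³, twice continuously differentiable on the punctured open ball B_r(0) ∖ {0}, and satisfies w ≥ 0 on \bar{B}_r(0) ∖ {0} and Δw ≤ 0 on B_r(0) ∖ {0}. Then for every x ∈ \bar{B}_r(0) ∖ {0}, w(x) ≥ min_{∂B_r(0)} w. -/
/-!
Since `‖y‖⁻¹` is harmonic on `ℝ³ ∖ {0}` and `Δ ‖y‖² = 6`, for `ε > 0` the function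
`v = w + ε m ‖y‖⁻¹ - ε ‖y‖²`, where `m` is the minimum of `w` on the sphere of radius `r`,
is strictly superharmonic. At an interior local minimum the second-derivative test along
each coordinate direction would force `Δ v ≥ 0`, so on every annulus `δ ≤ ‖y‖ ≤ r` the
minimum of `v` lies on the boundary. For `δ` small the term `ε m ‖y‖⁻¹` and `w ≥ 0`
make the inner sphere harmless, which yields
`m ≤ w x + ε (m (‖x‖⁻¹ - r⁻¹) + r² - ‖x‖²)`; letting `ε → 0` gives `m ≤ w x`.
-/

open MeasureTheory Filter Metric

noncomputable section

abbrev E3 := EuclideanSpace ℝ (Fin 3)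

/-- The Euclidean Laplacian: sum of pure second partial derivatives. -/
def lap (f : E3 → ℝ) (x : E3) : ℝ :=
  ∑ i : Fin 3,
    fderiv ℝ (fun z => fderiv ℝ f z (EuclideanSpace.single i 1)) x (EuclideanSpace.single i 1)

open InnerProductSpace Laplacian Topology Module

theorem le_of_forall_pos_le_add_mul {a b c : ℝ} (h : ∀ ε > 0, a ≤ b + ε * c) : a ≤ b := by
  have hlim : Tendsto (fun ε => b + ε * c) (𝓝[>] 0) (𝓝 b) := by
    have : Continuous fun ε : ℝ => b + ε * c := by fun_prop
    simpa using (this.tendsto 0).mono_left nhdsWithin_le_nhds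
  exact ge_of_tendsto hlim (eventually_nhdsWithin_of_forall h)

theorem IsLocalMin.deriv_deriv_nonneg {g : ℝ → ℝ} {t : ℝ} (hmin : IsLocalMin g t)
    (hg : ContinuousAt g t) : 0 ≤ deriv (deriv g) t := by
  by_contra! hneg
  have hmax : IsLocalMax g t := isLocalMax_of_deriv_deriv_neg hneg hmin.deriv_eq_zero hg
  have hconst : g =ᶠ[𝓝 t] fun _ => g t :=
    (hmin.and hmax).mono fun s hs => le_antisymm hs.2 hs.1
  have hderiv : deriv g =ᶠ[𝓝 t] fun _ => 0 :=
    hconst.eventuallyEq_nhds.mono fun s hs => by rw [hs.deriv_eq, deriv_const]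
  rw [hderiv.deriv_eq, deriv_const] at hneg
  exact hneg.false

section

variable {E : Type*} [NormedAddCommGroup E] [NormedSpace ℝ E]

theorem IsLocalMin.iteratedFDeriv_two_nonneg {f : E → ℝ} {x : E} (hmin : IsLocalMin f x)
    (hf : ContDiffAt ℝ 2 f x) (v : E) : 0 ≤ iteratedFDeriv ℝ 2 f x ![v, v] := by
  have hline : ∀ t : ℝ, HasDerivAt (fun s : ℝ => x + s • v) v t := fun t => by
    simpa using ((hasDerivAt_id t).smul_const v).const_add x
  have hderiv : deriv (fun t : ℝ => f (x + t • v)) =ᶠ[𝓝 0] fun t => fderiv ℝ f (x + t • v) v := by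
    have hcont : ContinuousAt (fun s : ℝ => x + s • v) 0 := (hline 0).continuousAt
    have hdiff_near : ∀ᶠ y in 𝓝 x, DifferentiableAt ℝ f y :=
      (hf.eventually (by simp)).mono fun y hy => hy.differentiableAt (by simp)
    have hdiff : ∀ᶠ t in 𝓝 (0 : ℝ), DifferentiableAt ℝ f (x + t • v) :=
      hcont.eventually (by simpa using hdiff_near)
    exact hdiff.mono fun t ht => (ht.hasFDerivAt.comp_hasDerivAt t (hline t)).deriv
  have hsecond : HasDerivAt (fun t : ℝ => fderiv ℝ f (x + t • v) v)
      (fderiv ℝ (fderiv ℝ f) x v v) 0 := by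
    have h : HasFDerivAt (fderiv ℝ f) (fderiv ℝ (fderiv ℝ f) x) (x + (0 : ℝ) • v) := by
      simpa using ((hf.fderiv_right (m := 1) le_rfl).differentiableAt one_ne_zero).hasFDerivAt
    exact ((ContinuousLinearMap.apply ℝ ℝ v).hasFDerivAt.comp_hasDerivAt 0
      (h.comp_hasDerivAt 0 (hline 0)))
  have hmin' : IsLocalMin (fun t : ℝ => f (x + t • v)) 0 :=
    IsLocalMin.comp_continuous (g := fun t : ℝ => x + t • v) (by simpa using hmin)
      (hline 0).continuousAt
  have := hmin'.deriv_deriv_nonneg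
    (ContinuousAt.comp (by simpa using hf.continuousAt) (hline 0).continuousAt)
  rw [hderiv.deriv_eq, hsecond.deriv] at this
  simpa [iteratedFDeriv_two_apply] using this

end

section

variable {E : Type*} [NormedAddCommGroup E] [InnerProductSpace ℝ E] [FiniteDimensional ℝ E]

theorem IsLocalMin.laplacian_nonneg {f : E → ℝ} {x : E} (hmin : IsLocalMin f x)
    (hf : ContDiffAt ℝ 2 f x) : 0 ≤ Δ f x := by
  rw [laplacian_eq_iteratedFDeriv_stdOrthonormalBasis]
  exact Finset.sum_nonneg fun i _ => hmin.iteratedFDeriv_two_nonneg hf _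

theorem laplacian_comp_norm_sq {φ φ' : ℝ → ℝ} {φ'' : ℝ} {x : E}
    (hφ : ∀ᶠ t in 𝓝 (‖x‖ ^ 2), HasDerivAt φ (φ' t) t) (hφ' : HasDerivAt φ' φ'' (‖x‖ ^ 2)) :
    Δ (fun z : E => φ (‖z‖ ^ 2)) x = 2 * finrank ℝ E * φ' (‖x‖ ^ 2) + 4 * ‖x‖ ^ 2 * φ'' := by
  have hnormsq : ∀ z : E, HasFDerivAt (fun y : E => ‖y‖ ^ 2) (2 • innerSL ℝ z) z :=
    fun z => (hasStrictFDerivAt_norm_sq z).hasFDerivAt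
  have hfirst : fderiv ℝ (fun z => φ (‖z‖ ^ 2)) =ᶠ[𝓝 x]
      fun z => φ' (‖z‖ ^ 2) • (2 • innerSL ℝ z) := by
    have hcont : ContinuousAt (fun y : E => ‖y‖ ^ 2) x := (hnormsq x).continuousAt
    exact (hcont.eventually hφ).mono fun z hz => (hz.comp_hasFDerivAt z (hnormsq z)).fderiv
  have hsecond : HasFDerivAt (fun z => φ' (‖z‖ ^ 2) • (2 • innerSL ℝ z))
      (φ' (‖x‖ ^ 2) • (2 • innerSL ℝ) + (φ'' • (2 • innerSL ℝ x)).smulRight (2 • innerSL ℝ x)) x :=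
    (hφ'.comp_hasFDerivAt x (hnormsq x)).smul (2 • innerSL ℝ (E := E)).hasFDerivAt
  rw [laplacian_eq_iteratedFDeriv_stdOrthonormalBasis]
  set b := stdOrthonormalBasis ℝ E
  have hunit : ∀ i, innerSL ℝ (b i) (b i) = 1 := fun i => by
    rw [innerSL_apply_apply, real_inner_self_eq_norm_sq, b.orthonormal.1 i, one_pow]
  have hparseval : ∑ i, ⟪x, b i⟫_ℝ * ⟪x, b i⟫_ℝ = ‖x‖ ^ 2 := by
    simpa [real_inner_comm, real_inner_self_eq_norm_sq] using b.sum_inner_mul_inner x x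
  simp only [iteratedFDeriv_two_apply, hfirst.fderiv_eq, hsecond.fderiv]
  simp only [Matrix.cons_val_zero, Matrix.cons_val_one, add_apply, FunLike.coe_smul,
    Pi.smul_apply, ContinuousLinearMap.smulRight_apply, smul_eq_mul, nsmul_eq_mul]
  calc _ = ∑ i, (2 * φ' (‖x‖ ^ 2) + 4 * φ'' * (⟪x, b i⟫_ℝ * ⟪x, b i⟫_ℝ)) :=
        Finset.sum_congr rfl fun i _ => by
          simp only [Nat.cast_ofNat, Pi.mul_apply, Pi.ofNat_apply, hunit, mul_one,
            coe_innerSL_apply]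
          ring
    _ = _ := by
        rw [Finset.sum_add_distrib, ← Finset.mul_sum _ _ (4 * φ''), hparseval]
        simp only [Finset.sum_const, Finset.card_univ, Fintype.card_fin, nsmul_eq_mul]
        ring

theorem laplacian_norm_sq (x : E) : Δ (fun z : E => ‖z‖ ^ 2) x = 2 * finrank ℝ E := by
  have h := laplacian_comp_norm_sq (φ := id) (φ' := fun _ => 1) (φ'' := 0) (x := x)
    (Eventually.of_forall fun t => hasDerivAt_id t) (hasDerivAt_const _ _)
  simpa using h

theorem laplacian_norm_rpow_two_sub_finrank {x : E} (hx : x ≠ 0) :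
    Δ (fun z : E => ‖z‖ ^ (2 - finrank ℝ E : ℝ)) x = 0 := by
  set s : ℝ := (2 - finrank ℝ E) / 2
  have hrad : (fun z : E => ‖z‖ ^ (2 - finrank ℝ E : ℝ)) = fun z => (‖z‖ ^ 2) ^ s := by
    funext z
    rw [← Real.rpow_natCast, ← Real.rpow_mul (norm_nonneg z)]
    congr 1
    simp only [s]
    ring
  have ht : 0 < ‖x‖ ^ 2 := by positivity
  have hφ : ∀ᶠ t in 𝓝 (‖x‖ ^ 2), HasDerivAt (fun t => t ^ s) (s * t ^ (s - 1)) t :=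
    (eventually_ne_nhds ht.ne').mono fun t ht' => Real.hasDerivAt_rpow_const (Or.inl ht')
  have hφ' : HasDerivAt (fun t => s * t ^ (s - 1)) (s * ((s - 1) * (‖x‖ ^ 2) ^ (s - 1 - 1)))
      (‖x‖ ^ 2) :=
    (Real.hasDerivAt_rpow_const (Or.inl ht.ne')).const_mul s
  have hshift : ‖x‖ ^ 2 * (‖x‖ ^ 2) ^ (s - 1 - 1) = (‖x‖ ^ 2) ^ (s - 1) := by
    rw [mul_comm, ← Real.rpow_add_one ht.ne']
    ring_nf
  rw [hrad, laplacian_comp_norm_sq hφ hφ']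
  linear_combination (4 * s * (s - 1)) * hshift

theorem IsCompact.exists_isMinOn_notMem_of_laplacian_neg {K U : Set E} (hK : IsCompact K)
    (hne : K.Nonempty) (hU : IsOpen U) (hUK : U ⊆ K) {v : E → ℝ} (hv : ContinuousOn v K)
    (hΔ : ∀ p ∈ U, ContDiffAt ℝ 2 v p ∧ Δ v p < 0) : ∃ p ∈ K, p ∉ U ∧ IsMinOn v K p := by
  obtain ⟨p, hpK, hmin⟩ := hK.exists_isMinOn hne hv
  refine ⟨p, hpK, fun hpU => ?_, hmin⟩
  obtain ⟨hv2, hneg⟩ := hΔ p hpU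
  have hloc : IsLocalMin v p := hmin.isLocalMin (mem_of_superset (hU.mem_nhds hpU) hUK)
  exact (hloc.laplacian_nonneg hv2).not_gt hneg

theorem exists_isMinOn_annulus_of_laplacian_neg {δ r : ℝ} {v : E → ℝ}
    (hne : {y : E | δ ≤ ‖y‖ ∧ ‖y‖ ≤ r}.Nonempty)
    (hv : ContinuousOn v {y | δ ≤ ‖y‖ ∧ ‖y‖ ≤ r})
    (hΔ : ∀ p : E, δ < ‖p‖ → ‖p‖ < r → ContDiffAt ℝ 2 v p ∧ Δ v p < 0) :
    ∃ p, (‖p‖ = δ ∨ ‖p‖ = r) ∧ IsMinOn v {y | δ ≤ ‖y‖ ∧ ‖y‖ ≤ r} p := by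
  have hK : IsCompact {y : E | δ ≤ ‖y‖ ∧ ‖y‖ ≤ r} := by
    refine (isCompact_closedBall (0 : E) r).of_isClosed_subset ?_ fun y hy => ?_
    · exact (isClosed_le continuous_const continuous_norm).inter
        (isClosed_le continuous_norm continuous_const)
    · simpa using hy.2
  have hU : IsOpen {y : E | δ < ‖y‖ ∧ ‖y‖ < r} :=
    (isOpen_lt continuous_const continuous_norm).inter (isOpen_lt continuous_norm continuous_const)
  obtain ⟨p, hpK, hpU, hpmin⟩ := hK.exists_isMinOn_notMem_of_laplacian_neg hne hU
    (fun y hy => ⟨hy.1.le, hy.2.le⟩) hv fun p hp => hΔ p hp.1 hp.2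
  refine ⟨p, ?_, hpmin⟩
  by_contra! h
  exact hpU ⟨lt_of_le_of_ne hpK.1 h.1.symm, lt_of_le_of_ne hpK.2 h.2⟩

end

theorem ContDiffAt.add_inv_norm_add_norm_sq {E : Type*} [NormedAddCommGroup E]
    [InnerProductSpace ℝ E] {w : E → ℝ} {p : E} (hw : ContDiffAt ℝ 2 w p)
    (hp : p ≠ 0) (a b : ℝ) : ContDiffAt ℝ 2 (fun y => w y + a * ‖y‖⁻¹ + b * ‖y‖ ^ 2) p :=
  (hw.add (((contDiffAt_norm ℝ hp).inv (norm_ne_zero_iff.mpr hp)).const_smul a)).add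
    ((contDiff_norm_sq ℝ).contDiffAt.const_smul b)

theorem lap_eq_laplacian {f : E3 → ℝ} {x : E3} (hf : ContDiffAt ℝ 2 f x) : lap f x = Δ f x := by
  have hd : DifferentiableAt ℝ (fderiv ℝ f) x :=
    (hf.fderiv_right (m := 1) le_rfl).differentiableAt one_ne_zero
  rw [laplacian_eq_iteratedFDeriv_orthonormalBasis f (EuclideanSpace.basisFun (Fin 3) ℝ)]
  refine Finset.sum_congr rfl fun i _ => ?_
  rw [(hd.hasFDerivAt.clm_apply (hasFDerivAt_const _ x)).fderiv]
  simp [iteratedFDeriv_two_apply]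

theorem laplacian_add_inv_norm_add_norm_sq {w : E3 → ℝ} {p : E3} (hw : ContDiffAt ℝ 2 w p)
    (hp : p ≠ 0) (a b : ℝ) :
    Δ (fun y => w y + a * ‖y‖⁻¹ + b * ‖y‖ ^ 2) p = lap w p + 6 * b := by
  have hinv : ContDiffAt ℝ 2 (fun y : E3 => ‖y‖⁻¹) p :=
    (contDiffAt_norm ℝ hp).inv (norm_ne_zero_iff.mpr hp)
  have hsq : ContDiffAt ℝ 2 (fun y : E3 => ‖y‖ ^ 2) p := (contDiff_norm_sq ℝ).contDiffAt
  have hharm : Δ (fun y : E3 => ‖y‖⁻¹) p = 0 := by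
    have h := laplacian_norm_rpow_two_sub_finrank (E := E3) hp
    rw [finrank_euclideanSpace_fin] at h
    norm_num [Real.rpow_neg_one] at h
    exact h
  change Δ (w + a • (fun y : E3 => ‖y‖⁻¹) + b • (fun y : E3 => ‖y‖ ^ 2)) p = _
  rw [ContDiffAt.laplacian_add (f₁ := w + a • fun y : E3 => ‖y‖⁻¹)
      (f₂ := b • fun y : E3 => ‖y‖ ^ 2) (hw.add (hinv.const_smul a)) (hsq.const_smul b),
    ContDiffAt.laplacian_add (f₂ := a • fun y : E3 => ‖y‖⁻¹) hw (hinv.const_smul a),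
    laplacian_smul a hinv, laplacian_smul b hsq, hharm, laplacian_norm_sq, lap_eq_laplacian hw]
  simp only [smul_eq_mul, mul_zero, add_zero, finrank_euclideanSpace, Fintype.card_fin]
  ring

theorem le_add_mul_of_lap_nonpos_of_annulus {r m ε δ : ℝ} (hε : 0 < ε) (hδ : 0 < δ)
    {w : E3 → ℝ} (hwcont : ContinuousOn w (closedBall (0 : E3) r \ {0}))
    (hwC2 : ContDiffOn ℝ 2 w (ball (0 : E3) r \ {0}))
    (hwnonneg : ∀ x ∈ closedBall (0 : E3) r \ {0}, 0 ≤ w x)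
    (hlap : ∀ x ∈ ball (0 : E3) r \ {0}, lap w x ≤ 0)
    (hsphere : ∀ y ∈ sphere (0 : E3) r, m ≤ w y) (hinner : m + ε * m * r⁻¹ ≤ ε * m * δ⁻¹)
    {x : E3} (hδx : δ ≤ ‖x‖) (hxr : ‖x‖ ≤ r) :
    m ≤ w x + ε * (m * (‖x‖⁻¹ - r⁻¹) + (r ^ 2 - ‖x‖ ^ 2)) := by
  have hpunct : ∀ y : E3, δ ≤ ‖y‖ → ‖y‖ ≤ r → y ∈ closedBall (0 : E3) r \ {0} := fun y hδy hyr =>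
    ⟨mem_closedBall_zero_iff.mpr hyr, norm_pos_iff.mp (hδ.trans_le hδy)⟩
  set v : E3 → ℝ := fun y => w y + ε * m * ‖y‖⁻¹ + (-ε) * ‖y‖ ^ 2
  have hv : ContinuousOn v {y | δ ≤ ‖y‖ ∧ ‖y‖ ≤ r} := by
    have hw : ContinuousOn w {y : E3 | δ ≤ ‖y‖ ∧ ‖y‖ ≤ r} :=
      hwcont.mono fun y hy => hpunct y hy.1 hy.2
    have hinv : ContinuousOn (fun y : E3 => ‖y‖⁻¹) {y | δ ≤ ‖y‖ ∧ ‖y‖ ≤ r} :=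
      continuous_norm.continuousOn.inv₀ fun y hy => (hδ.trans_le hy.1).ne'
    exact (hw.add (hinv.const_smul (ε * m))).add (by fun_prop)
  have hΔ : ∀ p : E3, δ < ‖p‖ → ‖p‖ < r → ContDiffAt ℝ 2 v p ∧ Δ v p < 0 := fun p hδp hpr => by
    have hp : p ∈ ball (0 : E3) r \ {0} :=
      ⟨mem_ball_zero_iff.mpr hpr, norm_pos_iff.mp (hδ.trans hδp)⟩
    have hw : ContDiffAt ℝ 2 w p :=
      hwC2.contDiffAt ((isOpen_ball.sdiff isClosed_singleton).mem_nhds hp)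
    refine ⟨hw.add_inv_norm_add_norm_sq hp.2 _ _, ?_⟩
    rw [laplacian_add_inv_norm_add_norm_sq hw hp.2]
    linarith [hlap p hp]
  obtain ⟨p, hp, hpmin⟩ := exists_isMinOn_annulus_of_laplacian_neg ⟨x, hδx, hxr⟩ hv hΔ
  have hboundary : m + ε * m * r⁻¹ - ε * r ^ 2 ≤ v p := by
    rcases hp with hpδ | hpr
    · have hw0 := hwnonneg p (hpunct p hpδ.ge (hpδ.trans_le (hδx.trans hxr)))
      have hsq : δ ^ 2 ≤ r ^ 2 := pow_le_pow_left₀ hδ.le (hδx.trans hxr) 2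
      simp only [v, hpδ]
      nlinarith
    · have := hsphere p (by simpa using hpr)
      simp only [v, hpr]
      linarith
  have := hboundary.trans (hpmin ⟨hδx, hxr⟩)
  simp only [v] at this
  linarith

theorem le_add_mul_of_lap_nonpos_of_nonneg {r m ε : ℝ} (hm : 0 ≤ m) (hε : 0 < ε) {w : E3 → ℝ}
    (hwcont : ContinuousOn w (closedBall (0 : E3) r \ {0}))
    (hwC2 : ContDiffOn ℝ 2 w (ball (0 : E3) r \ {0}))
    (hwnonneg : ∀ x ∈ closedBall (0 : E3) r \ {0}, 0 ≤ w x)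
    (hlap : ∀ x ∈ ball (0 : E3) r \ {0}, lap w x ≤ 0)
    (hsphere : ∀ y ∈ sphere (0 : E3) r, m ≤ w y) {x : E3} (hx : x ≠ 0) (hxr : ‖x‖ ≤ r) :
    m ≤ w x + ε * (m * (‖x‖⁻¹ - r⁻¹) + (r ^ 2 - ‖x‖ ^ 2)) := by
  have hxpos : 0 < ‖x‖ := norm_pos_iff.mpr hx
  have hr : 0 < r := hxpos.trans_le hxr
  set δ := min ‖x‖ (r⁻¹ + ε⁻¹)⁻¹
  have hδ : 0 < δ := lt_min hxpos (by positivity)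
  have hδinv : r⁻¹ + ε⁻¹ ≤ δ⁻¹ := by
    rw [← inv_inv (r⁻¹ + ε⁻¹)]
    exact inv_anti₀ hδ (min_le_right _ _)
  have hinner : m + ε * m * r⁻¹ ≤ ε * m * δ⁻¹ := by
    calc m + ε * m * r⁻¹ = ε * m * (r⁻¹ + ε⁻¹) := by field_simp; ring
      _ ≤ ε * m * δ⁻¹ := mul_le_mul_of_nonneg_left hδinv (by positivity)
  exact le_add_mul_of_lap_nonpos_of_annulus hε hδ hwcont hwC2 hwnonneg hlap hsphere hinner
    (min_le_left _ _) hxr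

theorem stmt_11_general (r : ℝ) (w : E3 → ℝ)
    (hwcont : ContinuousOn w (closedBall (0 : E3) r \ {0}))
    (hwC2 : ContDiffOn ℝ 2 w (ball (0 : E3) r \ {0}))
    (hwnonneg : ∀ x ∈ closedBall (0 : E3) r \ {0}, 0 ≤ w x)
    (hlap : ∀ x ∈ ball (0 : E3) r \ {0}, lap w x ≤ 0) :
    ∀ x ∈ closedBall (0 : E3) r \ {0}, sInf (w '' sphere (0 : E3) r) ≤ w x := by
  rintro x ⟨hxr, hx0⟩
  rw [mem_closedBall_zero_iff] at hxr
  have hr : 0 < r := (norm_pos_iff.mpr hx0).trans_le hxr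
  have hsphere : sphere (0 : E3) r ⊆ closedBall (0 : E3) r \ {0} := fun y hy =>
    ⟨sphere_subset_closedBall hy, ne_zero_of_mem_sphere hr.ne' ⟨y, hy⟩⟩
  have hm : 0 ≤ sInf (w '' sphere (0 : E3) r) :=
    le_csInf ((NormedSpace.sphere_nonempty.mpr hr.le).image w)
      (Set.forall_mem_image.mpr fun y hy => hwnonneg y (hsphere hy))
  have hle : ∀ y ∈ sphere (0 : E3) r, sInf (w '' sphere (0 : E3) r) ≤ w y := fun y hy =>
    csInf_le ⟨0, Set.forall_mem_image.mpr fun z hz => hwnonneg z (hsphere hz)⟩ ⟨y, hy, rfl⟩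
  exact le_of_forall_pos_le_add_mul fun ε hε =>
    le_add_mul_of_lap_nonpos_of_nonneg hm hε hwcont hwC2 hwnonneg hlap hle hx0 hxr

theorem stmt_11 (r : ℝ) (hr : 0 < r) (w : E3 → ℝ)
    (hwcont : ContinuousOn w (closedBall (0 : E3) r \ {0}))
    (hwC2 : ContDiffOn ℝ 2 w (ball (0 : E3) r \ {0}))
    (hwnonneg : ∀ x ∈ closedBall (0 : E3) r \ {0}, 0 ≤ w x)
    (hlap : ∀ x ∈ ball (0 : E3) r \ {0}, lap w x ≤ 0) :
    ∀ x ∈ closedBall (0 : E3) r \ {0}, sInf (w '' sphere (0 : E3) r) ≤ w x :=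
  stmt_11_general r w hwcont hwC2 hwnonneg hlap
end
end

section
/- Let U : ℝ³ → ℝ be continuous and nonnegative with U(y) ≤ C(1+|y|)⁻⁷ for all y, for some constant C > 0, let v(x) = ∫_{ℝ³} |x−y| U(y) dy and α = ∫_{ℝ³} U(y) dy. Then for every x ≠ 0, |x| · | (x/|x|)·∇v(x) − α | ≤ 2 ∫_{ℝ³} |y| U(y) dy. -/
/-!
Differentiating under the integral sign gives ∇v(x) = ∫ U(y) e(y) dy with e(y) = (x - y)/|x - y|,
so |x| ((x/|x|)·∇v(x) - α) = ∫ (⟨x, e(y)⟩ - |x|) U(y) dy. Splitting x = y + (x - y) writes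
⟨x, e(y)⟩ - |x| = ⟨y, e(y)⟩ + (|x - y| - |x|), and both terms are bounded by |y|.
Since U decays like |y|⁻⁷ and 7 - 1 > 3, both U and |y| U are integrable on ℝ³.
-/

open MeasureTheory Filter Metric

noncomputable section

/-- The radial derivative ∂_r f = (x/|x|)·∇f. -/
def radDeriv (f : E3 → ℝ) (x : E3) : ℝ := inner ℝ (‖x‖⁻¹ • x) (gradient f x)

open RealInnerProductSpace

section

variable {E : Type*} [NormedAddCommGroup E] [InnerProductSpace ℝ E]

theorem hasFDerivAt_norm_of_ne_zero {x : E} (hx : x ≠ 0) :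
    HasFDerivAt (‖·‖) (innerSL ℝ (‖x‖⁻¹ • x)) x := by
  have hx' : ‖x‖ ≠ 0 := norm_ne_zero_iff.mpr hx
  have h := (hasStrictFDerivAt_norm_sq x).hasFDerivAt.sqrt (pow_ne_zero 2 hx')
  simp only [Real.sqrt_sq_eq_abs, abs_norm] at h
  refine h.congr_fderiv ?_
  ext w
  simp only [one_div, mul_inv_rev, smul_apply, coe_innerSL_apply,
    nsmul_eq_mul, Nat.cast_ofNat, smul_eq_mul, map_smul]
  field_simp

theorem norm_inv_norm_smul_le_one (z : E) : ‖‖z‖⁻¹ • z‖ ≤ 1 := by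
  rcases eq_or_ne z 0 with rfl | hz
  · simp
  · exact (norm_smul_inv_norm hz).le

theorem abs_inner_inv_norm_sub_smul_sub_norm_le (x y : E) :
    |⟪x, ‖x - y‖⁻¹ • (x - y)⟫ - ‖x‖| ≤ 2 * ‖y‖ := by
  rcases eq_or_ne x y with rfl | hxy
  · simp [two_mul]
  have hxy' : ‖x - y‖ ≠ 0 := norm_ne_zero_iff.mpr (sub_ne_zero.mpr hxy)
  have hsplit : ⟪x, ‖x - y‖⁻¹ • (x - y)⟫ - ‖x‖
      = ⟪y, ‖x - y‖⁻¹ • (x - y)⟫ + (‖x - y‖ - ‖x‖) := by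
    have h : ⟪x - y, ‖x - y‖⁻¹ • (x - y)⟫ = ‖x - y‖ := by
      rw [real_inner_smul_right, real_inner_self_eq_norm_mul_norm]
      field_simp
    rw [inner_sub_left] at h
    linarith
  have hunit : ‖‖x - y‖⁻¹ • (x - y)‖ = 1 := by
    rw [norm_smul, norm_inv, norm_norm, inv_mul_cancel₀ hxy']
  calc |⟪x, ‖x - y‖⁻¹ • (x - y)⟫ - ‖x‖|
      ≤ |⟪y, ‖x - y‖⁻¹ • (x - y)⟫| + |‖x - y‖ - ‖x‖| := hsplit ▸ abs_add_le _ _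
    _ ≤ ‖y‖ + ‖y‖ := by
      gcongr
      · simpa [hunit] using abs_real_inner_le_norm y (‖x - y‖⁻¹ • (x - y))
      · simpa using abs_norm_sub_norm_le (x - y) x
    _ = 2 * ‖y‖ := by ring

section Integral

variable [MeasurableSpace E] [BorelSpace E] [SecondCountableTopology E]
  {μ : Measure E} {U : E → ℝ}

theorem integrable_smul_inv_norm_sub_smul (hU : Integrable U μ) (x : E) :
    Integrable (fun y => U y • (‖x - y‖⁻¹ • (x - y))) μ :=
  hU.smul_bdd 1 (by fun_prop) (.of_forall fun y => norm_inv_norm_smul_le_one (x - y))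

variable [CompleteSpace E]

theorem hasGradientAt_integral_norm_sub_mul [NullSingletonClass μ] (hU : Integrable U μ)
    (hyU : Integrable (fun y => ‖y‖ * U y) μ) (x : E) :
    HasGradientAt (fun x => ∫ y, ‖x - y‖ * U y ∂μ)
      (∫ y, U y • (‖x - y‖⁻¹ • (x - y)) ∂μ) x := by
  have hg := integrable_smul_inv_norm_sub_smul hU x
  have hF_meas (x' : E) : AEStronglyMeasurable (fun y => ‖x' - y‖ * U y) μ :=
    (by fun_prop : Continuous fun y => ‖x' - y‖).aestronglyMeasurable.mul hU.1
  have hF_int : Integrable (fun y => ‖x - y‖ * U y) μ := by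
    refine ((hU.norm.const_mul ‖x‖).add hyU.norm).mono' (hF_meas x) (.of_forall fun y => ?_)
    simp only [Pi.add_apply, norm_mul, norm_norm, ← add_mul]
    exact mul_le_mul_of_nonneg_right (norm_sub_le x y) (norm_nonneg _)
  have h_lip : ∀ᵐ y ∂μ, ∀ x' ∈ Set.univ,
      ‖‖x' - y‖ * U y - ‖x - y‖ * U y‖ ≤ ‖U y‖ * ‖x' - x‖ := .of_forall fun y x' _ => by
    rw [← sub_mul, norm_mul, mul_comm]
    gcongr
    simpa using abs_norm_sub_norm_le (x' - y) (x - y)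
  have h_diff : ∀ᵐ y ∂μ, HasFDerivAt (fun x' => ‖x' - y‖ * U y)
      (innerSL ℝ (U y • (‖x - y‖⁻¹ • (x - y)))) x := by
    filter_upwards [μ.ae_ne x] with y hy
    have h := ((hasFDerivAt_norm_of_ne_zero (sub_ne_zero.mpr hy.symm)).comp x
      ((hasFDerivAt_id x).sub_const y)).mul_const (U y)
    refine h.congr_fderiv ?_
    ext w
    simp [mul_comm]
  have hF := (hasFDerivAt_integral_of_dominated_loc_of_lip' univ_mem (fun x' _ => hF_meas x')
    hF_int ((innerSL ℝ).continuous.comp_aestronglyMeasurable hg.1) h_lip hU.norm h_diff).2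
  rw [hasGradientAt_iff_hasFDerivAt]
  rwa [ContinuousLinearMap.integral_comp_comm _ hg] at hF

theorem abs_inner_integral_smul_sub_norm_mul_integral_le (hU : Integrable U μ)
    (hyU : Integrable (fun y => ‖y‖ * U y) μ) (hU0 : 0 ≤ U) (x : E) :
    |⟪x, ∫ y, U y • (‖x - y‖⁻¹ • (x - y)) ∂μ⟫ - ‖x‖ * ∫ y, U y ∂μ|
      ≤ 2 * ∫ y, ‖y‖ * U y ∂μ := by
  have hg := integrable_smul_inv_norm_sub_smul hU x
  rw [← integral_inner hg, ← integral_const_mul, ← integral_sub (hg.const_inner x)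
    (hU.const_mul _), ← integral_const_mul]
  refine (abs_integral_le_integral_abs).trans
    (integral_mono ((hg.const_inner x).sub (hU.const_mul _)).abs (hyU.const_mul 2) fun y => ?_)
  calc |⟪x, U y • (‖x - y‖⁻¹ • (x - y))⟫ - ‖x‖ * U y|
      = U y * |⟪x, ‖x - y‖⁻¹ • (x - y)⟫ - ‖x‖| := by
        rw [real_inner_smul_right, mul_comm ‖x‖, ← mul_sub, abs_mul, abs_of_nonneg (hU0 y)]
    _ ≤ U y * (2 * ‖y‖) := by gcongr; exacts [hU0 y, abs_inner_inv_norm_sub_smul_sub_norm_le x y]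
    _ = 2 * (‖y‖ * U y) := by ring

end Integral

end

section Decay

variable {F : Type*} [NormedAddCommGroup F]

theorem norm_mul_le_div_one_add_norm_pow {y : F} {a C : ℝ} {n : ℕ} (ha : 0 ≤ a)
    (h : a ≤ C / (1 + ‖y‖) ^ (n + 1)) : ‖y‖ * a ≤ C / (1 + ‖y‖) ^ n := by
  have hy : 0 < 1 + ‖y‖ := by positivity
  calc ‖y‖ * a ≤ (1 + ‖y‖) * a := by gcongr; linarith
    _ ≤ (1 + ‖y‖) * (C / (1 + ‖y‖) ^ (n + 1)) := by gcongr
    _ = C / (1 + ‖y‖) ^ n := by field_simp; ring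

variable [NormedSpace ℝ F] [FiniteDimensional ℝ F] [MeasurableSpace F] [BorelSpace F]
  {μ : Measure F} [μ.IsAddHaarMeasure]

theorem integrable_of_norm_le_div_one_add_norm_pow {G : Type*} [NormedAddCommGroup G]
    {f : F → G} {C : ℝ} {n : ℕ} (hn : Module.finrank ℝ F < n) (hf : AEStronglyMeasurable f μ)
    (hle : ∀ y, ‖f y‖ ≤ C / (1 + ‖y‖) ^ n) : Integrable f μ :=
  ((integrable_one_add_norm (r := n) (by exact_mod_cast hn)).const_mul C).mono' hf
    (.of_forall fun y => by
      rw [Real.rpow_neg (by positivity), Real.rpow_natCast]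
      exact hle y)

end Decay

theorem stmt_15_general (C : ℝ) (U : E3 → ℝ)
    (hUcont : Continuous U) (hUnonneg : ∀ y, 0 ≤ U y)
    (hUbound : ∀ y, U y ≤ C / (1 + ‖y‖) ^ 7)
    (v : E3 → ℝ) (hv : ∀ x, v x = ∫ y, ‖x - y‖ * U y)
    (α : ℝ) (hα : α = ∫ y, U y) :
    ∀ x : E3, x ≠ 0 → ‖x‖ * |radDeriv v x - α| ≤ 2 * ∫ y, ‖y‖ * U y := by
  intro x hx
  have hU : Integrable U :=
    integrable_of_norm_le_div_one_add_norm_pow (n := 7) (by simp) hUcont.aestronglyMeasurable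
      fun y => by rw [Real.norm_eq_abs, abs_of_nonneg (hUnonneg y)]; exact hUbound y
  have hyU : Integrable fun y : E3 => ‖y‖ * U y :=
    integrable_of_norm_le_div_one_add_norm_pow (n := 6) (by simp) (by fun_prop) fun y => by
      rw [Real.norm_eq_abs, abs_of_nonneg (mul_nonneg (norm_nonneg y) (hUnonneg y))]
      exact norm_mul_le_div_one_add_norm_pow (hUnonneg y) (hUbound y)
  have hgrad : gradient v x = ∫ y, U y • (‖x - y‖⁻¹ • (x - y)) := by
    rw [show v = _ from funext hv]
    exact (hasGradientAt_integral_norm_sub_mul hU hyU x).gradient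
  have hxn : ‖x‖ ≠ 0 := norm_ne_zero_iff.mpr hx
  calc ‖x‖ * |radDeriv v x - α| = |⟪x, gradient v x⟫ - ‖x‖ * α| := by
        rw [radDeriv, real_inner_smul_left, ← abs_norm x, ← abs_mul, abs_norm]
        congr 1
        field_simp
    _ ≤ 2 * ∫ y, ‖y‖ * U y := by
      rw [hgrad, hα]
      exact abs_inner_integral_smul_sub_norm_mul_integral_le hU hyU hUnonneg x

theorem stmt_15 (C : ℝ) (hC : 0 < C) (U : E3 → ℝ)
    (hUcont : Continuous U) (hUnonneg : ∀ y, 0 ≤ U y)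
    (hUbound : ∀ y, U y ≤ C / (1 + ‖y‖) ^ 7)
    (v : E3 → ℝ) (hv : ∀ x, v x = ∫ y, ‖x - y‖ * U y)
    (α : ℝ) (hα : α = ∫ y, U y) :
    ∀ x : E3, x ≠ 0 → ‖x‖ * |radDeriv v x - α| ≤ 2 * ∫ y, ‖y‖ * U y :=
  stmt_15_general C U hUcont hUnonneg hUbound v hv α hα
end
end
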